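/- arXiv:1509.05700 — 3 statements merged into one kernel-verified Lean document; each statement's English description precedes it below -/
import Mathlib

section
/- Let K be a loop, A an abelian group, and f : K × K → A a cocycle. The central extension E(K,A,f) is a Moufang loop if and only if K is a Moufang loop and f satisfies f(xy,zx) + f(x,y) + f(z,x) = f(x,(yz)x) + f(yz,x) + f(y,z) for all x, y, z ∈ K. -/
/-- A loop: a set with multiplication and a two-sided neutral element `1`
such that all left and right translations are bijections. -/
class Loop (Q : Type*) extends Mul Q, One Q where
  one_mul : ∀ x : Q, 1 * x = x
  mul_one : ∀ x : Q, x * 1 = x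
  leftBij : ∀ x : Q, Function.Bijective fun y : Q => x * y
  rightBij : ∀ x : Q, Function.Bijective fun y : Q => y * x

/-- the central extension `E(K,A,f)` is Moufang iff `K` is Moufang
and `f` satisfies the Moufang cocycle identity. -/
theorem extension_moufang_iff (K : Type*) [Loop K] (A : Type*) [AddCommGroup A]
    (f : K → K → A) (hf : ∀ x : K, f 1 x = 0 ∧ f x 1 = 0) :
    let mul : K × A → K × A → K × A :=
      fun p q => (p.1 * q.1, p.2 + q.2 + f p.1 q.1)
    ((∀ p q r : K × A, mul (mul p q) (mul r p) = mul p (mul (mul q r) p)) ↔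
      ((∀ x y z : K, (x * y) * (z * x) = x * ((y * z) * x)) ∧
       (∀ x y z : K, f (x * y) (z * x) + f x y + f z x =
          f x ((y * z) * x) + f (y * z) x + f y z))) := by
  intro mul
  constructor
  · intro h
    constructor
    · intro x y z
      have := congrArg Prod.fst (h (x, 0) (y, 0) (z, 0))
      simpa [mul] using this
    · intro x y z
      have := congrArg Prod.snd (h (x, 0) (y, 0) (z, 0))
      simp only [mul, zero_add, add_zero] at this
      simpa [add_comm, add_left_comm, add_assoc] using this
  · rintro ⟨h1, h2⟩ ⟨x, a⟩ ⟨y, b⟩ ⟨z, c⟩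
    have := h2 x y z
    simp only [mul, Prod.mk.injEq]
    refine ⟨h1 x y z, ?_⟩
    calc a + b + f x y + (c + a + f z x) + f (x * y) (z * x)
        = (a + b + c + a) + (f (x * y) (z * x) + f x y + f z x) := by abel
      _ = (a + b + c + a) + (f x ((y * z) * x) + f (y * z) x + f y z) := by rw [h2]
      _ = a + (b + c + f y z + a + f (y * z) x) + f x (y * z * x) := by abel
end

section
/- Let Q be a diassociative loop and A ≤ Z(Q) a central subloop such that the quotient Q/A is generated by at most 2 elements. Then Q is a group (i.e., Q is associative). -/
/-- An element is central if it commutes and associates with all elements. -/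
def IsCentral {Q : Type*} [Mul Q] (z : Q) : Prop :=
  (∀ x : Q, z * x = x * z) ∧ (∀ x y : Q, z * (x * y) = (z * x) * y) ∧
  (∀ x y : Q, x * (z * y) = (x * z) * y) ∧ (∀ x y : Q, x * (y * z) = (x * y) * z)

/-- Membership in the subloop generated by a subset `S` of a loop `Q`:
the smallest subset containing `S` and `1` and closed under multiplication
and both divisions. -/
inductive Subgen {Q : Type*} [Loop Q] (S : Set Q) : Q → Prop
  | mem {a : Q} : a ∈ S → Subgen S a
  | one : Subgen S 1
  | mul {a b : Q} : Subgen S a → Subgen S b → Subgen S (a * b)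
  | ldiv {a b : Q} : Subgen S a → Subgen S (a * b) → Subgen S b
  | rdiv {a b : Q} : Subgen S b → Subgen S (a * b) → Subgen S a

/-- a diassociative loop `Q` with a central subloop `A` such
that `Q/A` is at most two-generated (equivalently, `Q` is generated by
`{x, y} ∪ A` for some `x, y`) is a group. -/
theorem diassociative_two_generated_mod_center_is_group
    (Q : Type*) [Loop Q]
    (hdi : ∀ x y a b c : Q, Subgen {x, y} a → Subgen {x, y} b →
      Subgen {x, y} c → (a * b) * c = a * (b * c))
    (A : Set Q) (hA1 : (1 : Q) ∈ A)
    (hAmul : ∀ a ∈ A, ∀ b ∈ A, a * b ∈ A)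
    (hAldiv : ∀ a ∈ A, ∀ b : Q, a * b ∈ A → b ∈ A)
    (hArdiv : ∀ b ∈ A, ∀ a : Q, a * b ∈ A → a ∈ A)
    (hAcentral : ∀ a ∈ A, IsCentral a)
    (hgen : ∃ x y : Q, ∀ q : Q, Subgen ({x, y} ∪ A) q) :
    ∀ a b c : Q, (a * b) * c = a * (b * c) := by
  obtain ⟨x, y, hgen⟩ := hgen
  -- key rearrangement: (g*u)*(h*v) = (g*h)*(u*v) for u v ∈ A
  have key : ∀ g h u v : Q, u ∈ A → v ∈ A → (g * u) * (h * v) = (g * h) * (u * v) := by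
    intro g h u v hu hv
    obtain ⟨hu1, hu2, hu3, hu4⟩ := hAcentral u hu
    obtain ⟨huv1, huv2, huv3, huv4⟩ := hAcentral (u * v) (hAmul u hu v hv)
    calc (g * u) * (h * v) = g * (u * (h * v)) := (hu3 g (h * v)).symm
      _ = g * ((u * h) * v) := by rw [hu2]
      _ = g * ((h * u) * v) := by rw [hu1]
      _ = g * (h * (u * v)) := by rw [hu3]
      _ = (g * h) * (u * v) := huv4 g h
  -- decomposition: every q is g * u with g ∈ ⟨x,y⟩, u ∈ A
  have decomp : ∀ q : Q, ∃ g u : Q, Subgen {x, y} g ∧ u ∈ A ∧ q = g * u := by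
    intro q
    induction hgen q with
    | @mem a ha =>
      rcases ha with ha | ha
      · exact ⟨a, 1, Subgen.mem ha, hA1, (Loop.mul_one a).symm⟩
      · exact ⟨1, a, Subgen.one, ha, (Loop.one_mul a).symm⟩
    | one => exact ⟨1, 1, Subgen.one, hA1, (Loop.mul_one 1).symm⟩
    | @mul a b _ _ iha ihb =>
      obtain ⟨g, u, hg, hu, rfl⟩ := iha
      obtain ⟨h, v, hh, hv, rfl⟩ := ihb
      exact ⟨g * h, u * v, Subgen.mul hg hh, hAmul u hu v hv, key g h u v hu hv⟩
    | @ldiv a b _ _ iha ihab =>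
      obtain ⟨g, u, hg, hu, ha⟩ := iha
      obtain ⟨k, w, hk, hw, hab⟩ := ihab
      obtain ⟨h, hh⟩ := (Loop.leftBij g).2 k
      obtain ⟨v, hv⟩ := (Loop.leftBij u).2 w
      simp only at hh hv
      have hvA : v ∈ A := hAldiv u hu v (hv ▸ hw)
      refine ⟨h, v, Subgen.ldiv hg (hh ▸ hk), hvA, ?_⟩
      have : a * (h * v) = a * b := by
        rw [ha, key g h u v hu hvA, hh, hv, ← hab, ha]
      exact ((Loop.leftBij a).1 this).symm
    | @rdiv a b _ _ ihb ihab =>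
      obtain ⟨h, v, hh, hv, hb⟩ := ihb
      obtain ⟨k, w, hk, hw, hab⟩ := ihab
      obtain ⟨g, hg⟩ := (Loop.rightBij h).2 k
      obtain ⟨u, hu⟩ := (Loop.rightBij v).2 w
      simp only at hg hu
      have huA : u ∈ A := hArdiv v hv u (hu ▸ hw)
      refine ⟨g, u, Subgen.rdiv hh (hg ▸ hk), huA, ?_⟩
      have : (g * u) * b = a * b := by
        rw [hb, key g h u v huA hv, hg, hu, ← hab, hb]
      exact ((Loop.rightBij b).1 this).symm
  intro a b c
  obtain ⟨g1, u, hg1, hu, rfl⟩ := decomp a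
  obtain ⟨g2, v, hg2, hv, rfl⟩ := decomp b
  obtain ⟨g3, w, hg3, hw, rfl⟩ := decomp c
  have huvA := hAmul u hu v hv
  have hvwA := hAmul v hv w hw
  rw [key g1 g2 u v hu hv, key g2 g3 v w hv hw,
    key (g1 * g2) g3 (u * v) w huvA hw, key g1 (g2 * g3) u (v * w) hu hvwA,
    hdi x y g1 g2 g3 hg1 hg2 hg3]
  rw [(hAcentral w hw).2.2.2 u v]
end

section
/- Let V be a finite-dimensional vector space over F_p with basis B = {e_1,…,e_d}, and let α, β : V → F_p be maps of combinatorial degree at most n (i.e., their (n+1)-st derived forms vanish, equivalently their n-th derived forms are symmetric n-linear). If α_k and β_k agree on all k-tuples of basis vectors for every 1 ≤ k ≤ n (where α_1 = α), then α = β. -/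
/-!
If `α_{m+2}` vanishes identically, the recurrence
`α_{m+2}(x, y, w) = α_{m+1}(x + y, w) - α_{m+1}(x, w) - α_{m+1}(y, w)` makes `α_{m+1}` additive
in its first argument, hence, being symmetric, additive in every argument and so `𝔽_p`-multilinear;
a multilinear form vanishing on all tuples of basis vectors is zero. Derived forms are additive in
the map, so applying this to `α - β` and descending from `m + 1 = n + 1` to `m + 1 = 1`, where
`α_1 = α`, gives `α - β = 0`.
-/

/-- The `n`-th derived form of `α : V → F_p`:
`α_n(u_1,…,u_n) = Σ_{∅ ≠ {i_1,…,i_m} ⊆ {1,…,n}} (−1)^{n−m} α(u_{i_1}+⋯+u_{i_m})`,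
the empty subset contributing `0` (the convention `α(∅) = 0`).
Note `derivedForm α 1 u = α (u 0)`, i.e. `α_1 = α`. -/
def derivedForm {V : Type*} [AddCommGroup V] {p : ℕ} (α : V → ZMod p)
    (n : ℕ) (u : Fin n → V) : ZMod p :=
  ∑ s ∈ Finset.univ.powerset.filter (fun s : Finset (Fin n) => s ≠ ∅),
    (-1 : ZMod p) ^ (n - s.card) * α (∑ i ∈ s, u i)

open Finset

theorem Fin.sum_finset_succ {M : Type*} [AddCommMonoid M] {n : ℕ}
    (g : Finset (Fin (n + 1)) → M) :
    ∑ s, g s = ∑ t : Finset (Fin n), g (t.map (Fin.succEmb n)) +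
      ∑ t : Finset (Fin n), g (insert 0 (t.map (Fin.succEmb n))) := by
  rw [← powerset_univ, Fin.univ_succ, cons_eq_insert, sum_powerset_insert (by simp),
    map_eq_image, powerset_image, sum_image, sum_image]
  · simp [map_eq_image]
  all_goals exact (image_injective (Fin.succ_injective n)).injOn

section

variable {V : Type*} [AddCommGroup V] {p : ℕ}

theorem derivedForm_add_neg_one_pow_mul_eq_sum (α : V → ZMod p) (n : ℕ) (u : Fin n → V) :
    derivedForm α n u + (-1) ^ n * α 0 =
      ∑ s : Finset (Fin n), (-1) ^ (n - #s) * α (∑ i ∈ s, u i) := by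
  rw [derivedForm, filter_ne', powerset_univ]
  simp

theorem derivedForm_cons (α : V → ZMod p) {n : ℕ} (x : V) (u : Fin n → V) :
    derivedForm α (n + 1) (Fin.cons x u) =
      derivedForm (fun z => α (x + z)) n u + (-1) ^ n * α x - derivedForm α n u := by
  have h := derivedForm_add_neg_one_pow_mul_eq_sum α (n + 1) (Fin.cons x u)
  have hx := derivedForm_add_neg_one_pow_mul_eq_sum (fun z => α (x + z)) n u
  have h0 := derivedForm_add_neg_one_pow_mul_eq_sum α n u
  have hsign : ∀ t : Finset (Fin n), (-1 : ZMod p) ^ (n + 1 - #t) = -(-1) ^ (n - #t) := by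
    intro t
    rw [Nat.sub_add_comm (by simpa using card_le_univ t), pow_succ, mul_neg_one]
  rw [add_zero] at hx
  simp only [Fin.sum_finset_succ, sum_map, card_map, Fin.coe_succEmb, Fin.cons_succ, hsign,
    neg_mul, sum_neg_distrib, mem_map, Fin.succ_ne_zero, and_false, exists_false, not_false_eq_true,
    sum_insert, card_insert_of_notMem, Nat.reduceSubDiff, Fin.cons_zero] at h
  linear_combination h - hx + h0

theorem derivedForm_one (α : V → ZMod p) (u : Fin 1 → V) : derivedForm α 1 u = α (u 0) := by
  have h : (univ : Finset (Fin 1)).powerset.filter (· ≠ ∅) = {{0}} := by decide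
  simp [derivedForm, h]

theorem derivedForm_sub (α β : V → ZMod p) (n : ℕ) (u : Fin n → V) :
    derivedForm (α - β) n u = derivedForm α n u - derivedForm β n u := by
  simp only [derivedForm, ← sum_sub_distrib, Pi.sub_apply, mul_sub]

theorem derivedForm_comp_perm (α : V → ZMod p) {n : ℕ} (u : Fin n → V)
    (σ : Equiv.Perm (Fin n)) :
    derivedForm α n (u ∘ σ) = derivedForm α n u := by
  refine sum_nbij' (·.map σ.toEmbedding) (·.map σ.symm.toEmbedding) ?_ ?_ ?_ ?_ ?_ <;>
    simp [map_map, sum_map]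

theorem derivedForm_update (α : V → ZMod p) {n : ℕ} (u : Fin (n + 1) → V) (i : Fin (n + 1))
    (x : V) :
    derivedForm α (n + 1) (Function.update u i x) =
      derivedForm α (n + 1) (Fin.cons x (i.removeNth u)) := by
  rw [← Fin.insertNth_removeNth, ← Fin.cons_comp_cycleRange, derivedForm_comp_perm]

theorem derivedForm_cons_cons (α : V → ZMod p) {n : ℕ} (x y : V) (w : Fin n → V) :
    derivedForm α (n + 2) (Fin.cons x (Fin.cons y w)) =
      derivedForm α (n + 1) (Fin.cons (x + y) w) - derivedForm α (n + 1) (Fin.cons x w) -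
        derivedForm α (n + 1) (Fin.cons y w) := by
  simp only [derivedForm_cons, add_assoc]
  ring

theorem derivedForm_update_add (α : V → ZMod p) {n : ℕ}
    (H : ∀ u : Fin (n + 2) → V, derivedForm α (n + 2) u = 0) (u : Fin (n + 1) → V)
    (i : Fin (n + 1)) (x y : V) :
    derivedForm α (n + 1) (Function.update u i (x + y)) =
      derivedForm α (n + 1) (Function.update u i x) +
        derivedForm α (n + 1) (Function.update u i y) := by
  have h := H (Fin.cons x (Fin.cons y (i.removeNth u)))
  rw [derivedForm_cons_cons] at h
  simp only [derivedForm_update]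
  linear_combination h

variable [Module (ZMod p) V]

def derivedFormMultilinearMap (α : V → ZMod p) {n : ℕ}
    (H : ∀ u : Fin (n + 2) → V, derivedForm α (n + 2) u = 0) :
    MultilinearMap (ZMod p) (fun _ : Fin (n + 1) => V) (ZMod p) :=
  MultilinearMap.mk' (derivedForm α (n + 1)) (derivedForm_update_add α H) fun u i c x =>
    -- additive maps between `ZMod p`-modules are `ZMod p`-linear
    let slot : V →+ ZMod p := .mk' (fun x => derivedForm α (n + 1) (Function.update u i x))
      (derivedForm_update_add α H u i)
    (slot.toZModLinearMap p).map_smul c x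

theorem derivedForm_eq_zero_of_eq_zero_on_basis {ι : Type*} (b : Module.Basis ι (ZMod p) V)
    (α : V → ZMod p) {n : ℕ} (H : ∀ u : Fin (n + 2) → V, derivedForm α (n + 2) u = 0)
    (hb : ∀ idx : Fin (n + 1) → ι, derivedForm α (n + 1) (fun i => b (idx i)) = 0)
    (u : Fin (n + 1) → V) : derivedForm α (n + 1) u = 0 :=
  congr($(Module.Basis.ext_multilinear (f := derivedFormMultilinearMap α H) (g := 0)
    (fun _ => b) hb) u)

theorem eq_zero_of_derivedForm_eq_zero_on_basis {ι : Type*} (b : Module.Basis ι (ZMod p) V)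
    (α : V → ZMod p) {n : ℕ} (H : ∀ u : Fin (n + 1) → V, derivedForm α (n + 1) u = 0)
    (hb : ∀ k, 1 ≤ k → k ≤ n → ∀ idx : Fin k → ι, derivedForm α k (fun i => b (idx i)) = 0) :
    α = 0 := by
  have hone : ∀ u : Fin 1 → V, derivedForm α 1 u = 0 :=
    Nat.decreasingInduction
      (motive := fun m _ => ∀ u : Fin (m + 1) → V, derivedForm α (m + 1) u = 0)
      (fun k hk ih => derivedForm_eq_zero_of_eq_zero_on_basis b α ih (hb (k + 1) k.succ_pos hk))
      H n.zero_le
  funext v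
  simpa [derivedForm_one] using hone fun _ => v

end

theorem derivedForms_on_basis_determine_map_general {p : ℕ}
    (V : Type*) [AddCommGroup V] [Module (ZMod p) V]
    (d : ℕ) (e : Module.Basis (Fin d) (ZMod p) V)
    (n : ℕ) (α β : V → ZMod p)
    (hα : ∀ u : Fin (n + 1) → V, derivedForm α (n + 1) u = 0)
    (hβ : ∀ u : Fin (n + 1) → V, derivedForm β (n + 1) u = 0)
    (hagree : ∀ k : ℕ, 1 ≤ k → k ≤ n → ∀ idx : Fin k → Fin d,
      derivedForm α k (fun i => e (idx i)) =
        derivedForm β k (fun i => e (idx i))) :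
    α = β :=
  sub_eq_zero.mp <| eq_zero_of_derivedForm_eq_zero_on_basis e (α - β)
    (fun u => by rw [derivedForm_sub, hα, hβ, sub_zero])
    (fun k hk hkn idx => by rw [derivedForm_sub, hagree k hk hkn idx, sub_self])

/-- if `α, β : V → F_p` have combinatorial degree at most `n`
(their `(n+1)`-st derived forms vanish) and `α_k`, `β_k` agree on all
`k`-tuples of vectors from a basis of `V` for `1 ≤ k ≤ n`, then `α = β`. -/
theorem derivedForms_on_basis_determine_map {p : ℕ} (hp : p.Prime)
    (V : Type*) [AddCommGroup V] [Module (ZMod p) V]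
    (d : ℕ) (e : Module.Basis (Fin d) (ZMod p) V)
    (n : ℕ) (α β : V → ZMod p)
    (hα : ∀ u : Fin (n + 1) → V, derivedForm α (n + 1) u = 0)
    (hβ : ∀ u : Fin (n + 1) → V, derivedForm β (n + 1) u = 0)
    (hagree : ∀ k : ℕ, 1 ≤ k → k ≤ n → ∀ idx : Fin k → Fin d,
      derivedForm α k (fun i => e (idx i)) =
        derivedForm β k (fun i => e (idx i))) :
    α = β :=
  derivedForms_on_basis_determine_map_general V d e n α β hα hβ hagree
end
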